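/- arXiv:2407.10525 — 3 statements merged into one kernel-verified Lean document; each statement's English description precedes it below -/
import Mathlib

section
/- If an incentive-compatible direct mechanism (q, w) satisfies w'(θ) ≤ q'(θ) for all θ in [θ̲, θ̄] (with q, w differentiable) and the Bayesian plausibility condition ∫_{θ̲}^{θ̄} w dF = ∫_{θ̲}^{θ̄} q dF, then for every θ in [θ̲, θ̄], ∫_{θ̲}^{θ} w(x) dF(x) ≥ ∫_{θ̲}^{θ} q(x) dF(x). -/
/-- If an incentive-compatible mechanism satisfies w' ≤ q' on [θ̲,θ̄] and Bayesian
plausibility, then all partial integrals of w dominate those of q. -/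
theorem stmt_4 (tl tu : ℝ) (hlt : tl < tu) (htl : 0 < tl)
    (f c q w : ℝ → ℝ)
    (hf : ContinuousOn f (Set.Icc tl tu)) (hfpos : ∀ θ ∈ Set.Icc tl tu, 0 < f θ)
    (hprob : ∫ θ in tl..tu, f θ = 1)
    (hqc : ContinuousOn q (Set.Icc tl tu)) (hwc : ContinuousOn w (Set.Icc tl tu))
    (hIC : ∀ θ ∈ Set.Icc tl tu, ∀ θ' ∈ Set.Icc tl tu,
      w θ' - c (q θ') / θ ≤ w θ - c (q θ) / θ)
    (hdq : DifferentiableOn ℝ q (Set.Icc tl tu))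
    (hdw : DifferentiableOn ℝ w (Set.Icc tl tu))
    (hle : ∀ θ ∈ Set.Icc tl tu, deriv w θ ≤ deriv q θ)
    (hBP : ∫ θ in tl..tu, w θ * f θ = ∫ θ in tl..tu, q θ * f θ) :
    ∀ θ ∈ Set.Icc tl tu,
      ∫ x in tl..θ, q x * f x ≤ ∫ x in tl..θ, w x * f x := by
  set g : ℝ → ℝ := fun x => w x - q x with hg
  have hgc : ContinuousOn g (Set.Icc tl tu) := hwc.sub hqc
  have hint : Set.Ioo tl tu = interior (Set.Icc tl tu) := (interior_Icc).symm
  have hanti : AntitoneOn g (Set.Icc tl tu) := by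
    apply antitoneOn_of_deriv_nonpos (convex_Icc tl tu) hgc
    · rw [← hint]
      intro x hx
      exact ((hdw.differentiableAt (Icc_mem_nhds hx.1 hx.2)).sub
        (hdq.differentiableAt (Icc_mem_nhds hx.1 hx.2))).differentiableWithinAt
    · rw [← hint]
      intro x hx
      have hxI : x ∈ Set.Icc tl tu := Set.Ioo_subset_Icc_self hx
      have hw := hdw.differentiableAt (Icc_mem_nhds hx.1 hx.2)
      have hq := hdq.differentiableAt (Icc_mem_nhds hx.1 hx.2)
      rw [hg, deriv_fun_sub hw hq]
      linarith [hle x hxI]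
  -- integrability of g * f on subintervals
  have hgfI : ∀ a b, a ∈ Set.Icc tl tu → b ∈ Set.Icc tl tu →
      IntervalIntegrable (fun x => g x * f x) MeasureTheory.volume a b := by
    intro a b ha hb
    apply ContinuousOn.intervalIntegrable
    apply (hgc.mul hf).mono
    exact Set.uIcc_subset_Icc ha hb
  have htlm : tl ∈ Set.Icc tl tu := Set.left_mem_Icc.2 hlt.le
  have htum : tu ∈ Set.Icc tl tu := Set.right_mem_Icc.2 hlt.le
  -- total integral of g*f is zero
  have htot : ∫ x in tl..tu, g x * f x = 0 := by
    have : ∫ x in tl..tu, g x * f x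
        = (∫ x in tl..tu, w x * f x) - ∫ x in tl..tu, q x * f x := by
      rw [← intervalIntegral.integral_sub]
      · simp [hg, sub_mul]
      · exact ContinuousOn.intervalIntegrable <| (hwc.mul hf).mono
          (Set.uIcc_subset_Icc htlm htum)
      · exact ContinuousOn.intervalIntegrable <| (hqc.mul hf).mono
          (Set.uIcc_subset_Icc htlm htum)
    rw [this, hBP, sub_self]
  intro θ hθ
  have key : 0 ≤ ∫ x in tl..θ, g x * f x := by
    rcases le_or_gt 0 (g θ) with hpos | hneg
    · apply intervalIntegral.integral_nonneg hθ.1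
      intro x hx
      have hxI : x ∈ Set.Icc tl tu := ⟨hx.1, hx.2.trans hθ.2⟩
      have := hanti hxI hθ hx.2
      have hf0 := (hfpos x hxI).le
      nlinarith
    · have hright : ∫ x in θ..tu, g x * f x ≤ 0 := by
        have h0 : 0 ≤ ∫ x in θ..tu, -(g x * f x) := by
          apply intervalIntegral.integral_nonneg hθ.2
          intro x hx
          have hxI : x ∈ Set.Icc tl tu := ⟨hθ.1.trans hx.1, hx.2⟩
          have := hanti hθ hxI hx.1
          have hf0 := (hfpos x hxI).le
          nlinarith
        rw [intervalIntegral.integral_neg] at h0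
        linarith
      have hadd : (∫ x in tl..θ, g x * f x) + ∫ x in θ..tu, g x * f x
          = ∫ x in tl..tu, g x * f x :=
        intervalIntegral.integral_add_adjacent_intervals
          (hgfI tl θ htlm hθ) (hgfI θ tu hθ htum)
      linarith [htot ▸ hadd]
  have hsub : ∫ x in tl..θ, g x * f x
      = (∫ x in tl..θ, w x * f x) - ∫ x in tl..θ, q x * f x := by
    rw [← intervalIntegral.integral_sub]
    · simp [hg, sub_mul]
    · exact ContinuousOn.intervalIntegrable <| (hwc.mul hf).mono
        (Set.uIcc_subset_Icc htlm hθ)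
    · exact ContinuousOn.intervalIntegrable <| (hqc.mul hf).mono
        (Set.uIcc_subset_Icc htlm hθ)
  linarith [hsub ▸ key]
end

section
/- Under lower censorship with minimum standard q₀ = q_i(θ₀), the induced quality scheme q(θ) — equal to 0 on [θ̲, θ₀), equal to q_i(θ₀) on [θ₀, θ_c(θ₀)), and equal to q_f(θ) on [θ_c(θ₀), θ̄] — is incentive compatible: for each type θ, the prescribed quality maximizes q − c(q)/θ over the set {0} ∪ {q_i(θ₀)} ∪ {q_f(x) : x ∈ [θ_c(θ₀), θ̄]}. -/
lemma deriv_strictMono {c : ℝ → ℝ} (hc : ContDiff ℝ 2 c)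
    (hc'' : ∀ x > (0:ℝ), 0 < deriv (deriv c) x) :
    StrictMonoOn (deriv c) (Set.Ici 0) := by
  have h2 : ContDiff ℝ ((1:ℕ)+1) c := by exact_mod_cast hc
  have hd1 : ContDiff ℝ 1 (deriv c) := (contDiff_succ_iff_deriv.mp h2).2.2
  apply strictMonoOn_of_deriv_pos (convex_Ici 0) (hd1.continuous.continuousOn)
  intro x hx
  rw [interior_Ici] at hx
  exact hc'' x hx

lemma cdiff {c : ℝ → ℝ} (hc : ContDiff ℝ 2 c) : Differentiable ℝ c :=
  hc.differentiable (by norm_num)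

lemma gdiff {c : ℝ → ℝ} (hc : ContDiff ℝ 2 c) (θ : ℝ) :
    Differentiable ℝ (fun q => θ * q - c q) := by
  have := cdiff hc
  fun_prop

lemma gderiv {c : ℝ → ℝ} (hc : ContDiff ℝ 2 c) (θ x : ℝ) :
    deriv (fun q => θ * q - c q) x = θ - deriv c x := by
  have h : HasDerivAt (fun q => θ * q - c q) (θ * 1 - deriv c x) x :=
    ((hasDerivAt_id x).const_mul θ).sub ((cdiff hc x).hasDerivAt)
  simpa using h.deriv

lemma mono_aux {c : ℝ → ℝ} (hc : ContDiff ℝ 2 c)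
    (hc'' : ∀ x > (0:ℝ), 0 < deriv (deriv c) x)
    (θ : ℝ) {a b : ℝ} (ha : 0 ≤ a) (hab : a ≤ b) (hb : deriv c b ≤ θ) :
    θ * a - c a ≤ θ * b - c b := by
  have hsm := deriv_strictMono hc hc''
  have : MonotoneOn (fun q => θ * q - c q) (Set.Icc a b) := by
    apply monotoneOn_of_deriv_nonneg (convex_Icc a b)
      ((gdiff hc θ).continuous.continuousOn)
      (fun x _ => ((gdiff hc θ) x).differentiableWithinAt)
    intro x hx
    rw [interior_Icc] at hx
    rw [gderiv hc]
    have hxb : deriv c x < deriv c b :=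
      hsm (le_trans ha hx.1.le) (le_trans ha hab) hx.2
    linarith
  exact this (Set.left_mem_Icc.mpr hab) (Set.right_mem_Icc.mpr hab) hab

lemma anti_aux {c : ℝ → ℝ} (hc : ContDiff ℝ 2 c)
    (hc'' : ∀ x > (0:ℝ), 0 < deriv (deriv c) x)
    (θ : ℝ) {a b : ℝ} (ha : 0 ≤ a) (hab : a ≤ b) (hb : θ ≤ deriv c a) :
    θ * b - c b ≤ θ * a - c a := by
  have hsm := deriv_strictMono hc hc''
  have : AntitoneOn (fun q => θ * q - c q) (Set.Icc a b) := by
    apply antitoneOn_of_deriv_nonpos (convex_Icc a b)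
      ((gdiff hc θ).continuous.continuousOn)
      (fun x _ => ((gdiff hc θ) x).differentiableWithinAt)
    intro x hx
    rw [interior_Icc] at hx
    rw [gderiv hc]
    have hax : deriv c a < deriv c x :=
      hsm ha (le_trans ha hx.1.le) hx.1
    linarith
  exact this (Set.left_mem_Icc.mpr hab) (Set.right_mem_Icc.mpr hab) hab

lemma opt_aux {c : ℝ → ℝ} (hc : ContDiff ℝ 2 c)
    (hc'' : ∀ x > (0:ℝ), 0 < deriv (deriv c) x)
    {θ qs q' : ℝ} (hqs : 0 ≤ qs) (hq' : 0 ≤ q') (hds : deriv c qs = θ) :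
    θ * q' - c q' ≤ θ * qs - c qs := by
  rcases le_total q' qs with h | h
  · exact mono_aux hc hc'' θ hq' h (le_of_eq hds)
  · exact anti_aux hc hc'' θ hqs h (ge_of_eq hds)

/-- The quality scheme induced by lower censorship with minimum standard
q₀ = q_i(θ₀) is incentive compatible. -/
theorem stmt_8 (tl tu θ₀ qi0 tc : ℝ) (c qf q : ℝ → ℝ)
    (htl : 0 < tl)
    (hc : ContDiff ℝ 2 c) (hc0 : c 0 = 0) (hc0' : deriv c 0 = 0)
    (hc' : ∀ x > (0:ℝ), 0 < deriv c x)
    (hc'' : ∀ x > (0:ℝ), 0 < deriv (deriv c) x)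
    (hqi0 : 0 < qi0) (hqi0eq : c qi0 = θ₀ * qi0)
    (htc : tc = deriv c qi0)
    (hθ₀ : θ₀ ∈ Set.Icc tl tu) (htcle : tc ≤ tu)
    (hqf : ∀ x ∈ Set.Icc tc tu, deriv c (qf x) = x ∧ 0 < qf x)
    (hq : ∀ θ ∈ Set.Icc tl tu,
      q θ = if θ < θ₀ then 0 else if θ < tc then qi0 else qf θ) :
    ∀ θ ∈ Set.Icc tl tu, ∀ q' : ℝ,
      (q' = 0 ∨ q' = qi0 ∨ ∃ x ∈ Set.Icc tc tu, q' = qf x) →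
      q' - c q' / θ ≤ q θ - c (q θ) / θ := by
  have hsm := deriv_strictMono hc hc''
  have hdqi : deriv c qi0 = tc := htc.symm
  have hθ₀tc : θ₀ ≤ tc := by
    have h := mono_aux hc hc'' tc (le_refl 0) hqi0.le (le_of_eq hdqi)
    rw [hc0, hqi0eq] at h
    nlinarith
  have hqile : ∀ x ∈ Set.Icc tc tu, qi0 ≤ qf x := by
    intro x hx
    by_contra hlt
    push_neg at hlt
    have := hsm (le_of_lt (hqf x hx).2) hqi0.le hlt
    rw [(hqf x hx).1, hdqi] at this
    linarith [hx.1]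
  intro θ hθ q' hq'
  have hθpos : 0 < θ := lt_of_lt_of_le htl hθ.1
  rw [hq θ hθ]
  suffices h : θ * q' - c q' ≤ θ * (if θ < θ₀ then 0 else if θ < tc then qi0 else qf θ)
      - c (if θ < θ₀ then 0 else if θ < tc then qi0 else qf θ) by
    set Q := (if θ < θ₀ then (0:ℝ) else if θ < tc then qi0 else qf θ) with hQ
    have e1 : q' - c q' / θ = (θ * q' - c q') / θ := by field_simp
    have e2 : Q - c Q / θ = (θ * Q - c Q) / θ := by field_simp
    rw [e1, e2]
    exact (div_le_div_iff_of_pos_right hθpos).mpr h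
  by_cases h1 : θ < θ₀
  · simp only [if_pos h1, mul_zero, hc0, sub_zero]
    have key : θ * qi0 - c qi0 ≤ 0 := by rw [hqi0eq]; nlinarith
    rcases hq' with rfl | rfl | ⟨x, hx, rfl⟩
    · simp [hc0]
    · exact key
    · have h2 := anti_aux hc hc'' θ hqi0.le (hqile x hx) (by rw [hdqi]; linarith)
      linarith
  · push_neg at h1
    by_cases h2 : θ < tc
    · simp only [if_neg (not_lt.mpr h1), if_pos h2]
      rcases hq' with rfl | rfl | ⟨x, hx, rfl⟩
      · rw [hc0, hqi0eq]; nlinarith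
      · exact le_refl _
      · exact anti_aux hc hc'' θ hqi0.le (hqile x hx) (by rw [hdqi]; linarith)
    · push_neg at h2
      simp only [if_neg (not_lt.mpr h1), if_neg (not_lt.mpr h2)]
      have hθmem : θ ∈ Set.Icc tc tu := ⟨h2, hθ.2⟩
      have hds := (hqf θ hθmem).1
      have hqs := (hqf θ hθmem).2
      rcases hq' with rfl | rfl | ⟨x, hx, rfl⟩
      · exact opt_aux hc hc'' hqs.le (le_refl 0) hds
      · exact opt_aux hc hc'' hqs.le hqi0.le hds
      · exact opt_aux hc hc'' hqs.le (hqf x hx).2.le hds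
end

section
/- Under lower censorship, the derivative of the minimum-standard quality with respect to the cutoff satisfies q_i'(θ₀) = q_i(θ₀)/(θ_c(θ₀) − θ₀) > 0, where θ_c(θ₀) = c'(q_i(θ₀)). -/
/-- The minimum-standard quality satisfies
q_i'(θ₀) = q_i(θ₀)/(θ_c(θ₀) − θ₀) > 0, where θ_c(θ₀) = c'(q_i(θ₀)). -/
theorem stmt_14 (c qi : ℝ → ℝ) (θ₀ : ℝ) (hθ₀ : 0 < θ₀)
    (hc : ContDiff ℝ 2 c) (hc0 : c 0 = 0) (hc0' : deriv c 0 = 0)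
    (hc' : ∀ x > (0:ℝ), 0 < deriv c x)
    (hc'' : ∀ x > (0:ℝ), 0 < deriv (deriv c) x)
    (hqi : ∀ θ > (0:ℝ), 0 < qi θ ∧ c (qi θ) = θ * qi θ)
    (hdiff : DifferentiableAt ℝ qi θ₀) :
    deriv qi θ₀ = qi θ₀ / (deriv c (qi θ₀) - θ₀) ∧ 0 < deriv qi θ₀ := by
  obtain ⟨hq, heq⟩ := hqi θ₀ hθ₀
  set q := qi θ₀ with hqdef
  have hcdiff : Differentiable ℝ c := hc.differentiable two_ne_zero
  have hc'cont : Continuous (deriv c) :=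
    ((hc.iterate_deriv' 1 1).differentiable one_ne_zero).continuous
  -- strict monotonicity of deriv c on Ici 0
  have hmono : StrictMonoOn (deriv c) (Set.Ici 0) := by
    apply strictMonoOn_of_deriv_pos (convex_Ici 0) (hc'cont.continuousOn)
    intro x hx
    rw [interior_Ici] at hx
    exact hc'' x hx
  -- MVT: ∃ ξ ∈ (0, q), deriv c ξ = θ₀
  have hmvt : ∃ ξ ∈ Set.Ioo (0:ℝ) q, deriv c ξ = (c q - c 0) / (q - 0) :=
    exists_deriv_eq_slope c hq hcdiff.continuous.continuousOn
      (hcdiff.differentiableOn)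
  obtain ⟨ξ, hξ, hξeq⟩ := hmvt
  have hslope : (c q - c 0) / (q - 0) = θ₀ := by
    rw [hc0, heq]; field_simp [hq.ne']; ring
  have hlt : θ₀ < deriv c q := by
    have := hmono (le_of_lt hξ.1) (le_of_lt (hξ.1.trans hξ.2)) hξ.2
    rw [hξeq, hslope] at this
    exact this
  have hpos : 0 < deriv c q - θ₀ := by linarith
  -- differentiate the identity
  have h1 : HasDerivAt (fun θ => c (qi θ)) (deriv c q * deriv qi θ₀) θ₀ :=
    (hcdiff q).hasDerivAt.comp θ₀ hdiff.hasDerivAt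
  have h2 : HasDerivAt (fun θ => θ * qi θ) (1 * qi θ₀ + θ₀ * deriv qi θ₀) θ₀ :=
    (hasDerivAt_id θ₀).mul hdiff.hasDerivAt
  have h3 : HasDerivAt (fun θ => c (qi θ) - θ * qi θ)
      (deriv c q * deriv qi θ₀ - (1 * qi θ₀ + θ₀ * deriv qi θ₀)) θ₀ := h1.sub h2
  have hev : (fun θ => c (qi θ) - θ * qi θ) =ᶠ[nhds θ₀] (fun _ => (0:ℝ)) := by
    filter_upwards [Ioi_mem_nhds hθ₀] with θ hθ
    have := (hqi θ hθ).2
    simp [this]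
  have h4 : HasDerivAt (fun _ : ℝ => (0:ℝ))
      (deriv c q * deriv qi θ₀ - (1 * qi θ₀ + θ₀ * deriv qi θ₀)) θ₀ :=
    h3.congr_of_eventuallyEq hev.symm
  have hD : deriv c q * deriv qi θ₀ - (1 * qi θ₀ + θ₀ * deriv qi θ₀) = 0 :=
    h4.unique (hasDerivAt_const θ₀ 0)
  have hq' : deriv qi θ₀ = q / (deriv c q - θ₀) := by
    field_simp
    linarith
  exact ⟨hq', by rw [hq']; positivity⟩
end
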